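/- arXiv:2208.08286 — 9 statements merged into one kernel-verified Lean document; each statement's English description precedes it below -/
import Mathlib

section
/- Let R be a commutative ring, M an R-module, I an ideal of R with I ⊆ Ann(M), and K a pseudo-absorbing primary submodule of M. Then K is a pseudo-absorbing primary submodule of M regarded as an R/I-module; specifically (K :_{R/I} M) = Q/I where Q = (K :_R M) is 2-absorbing primary, and Q/I is a 2-absorbing primary ideal of R/I. -/
/-- A proper ideal `I` is 2-absorbing primary if `a*b*c ∈ I` implies
`a*b ∈ I` or `a*c ∈ √I` or `b*c ∈ √I`. -/
def IsTwoAbsPrimary {R : Type*} [CommRing R] (I : Ideal R) : Prop :=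
  I ≠ ⊤ ∧ ∀ a b c : R, a * b * c ∈ I → a * b ∈ I ∨ a * c ∈ I.radical ∨ b * c ∈ I.radical

/-- A proper submodule `N` of `M` is pseudo-absorbing primary if `(N :_R M)`
is a 2-absorbing primary ideal of `R`. -/
def IsPseudoAbsPrimary {R M : Type*} [CommRing R] [AddCommGroup M] [Module R M]
    (N : Submodule R M) : Prop :=
  N ≠ ⊤ ∧ IsTwoAbsPrimary (N.colon ⊤)

/-- `M` is a pseudo-absorbing primary multiplication module if every
pseudo-absorbing primary submodule `N` satisfies `N = I • M` for some ideal `I`. -/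
def IsPAPMultiplication (R M : Type*) [CommRing R] [AddCommGroup M] [Module R M] : Prop :=
  ∀ N : Submodule R M, IsPseudoAbsPrimary N → ∃ I : Ideal R, N = I • (⊤ : Submodule R M)

/-!
Since `M` is an `R ⧸ I`-module through `R → R ⧸ I`, the `R ⧸ I`-submodules of `M` are its
`R`-submodules, and `(K :_{R ⧸ I} M)` is the image of `(K :_R M)`, which contains `I`.
The 2-absorbing primary property passes to the image of an ideal under a surjective ring
homomorphism whose kernel the ideal contains: lift `a, b, c`, apply the property upstairs, and
push the conclusion down, using that the image of `√J` lies in the radical of the image of `J`.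
-/

theorem IsTwoAbsPrimary.map {R S : Type*} [CommRing R] [CommRing S] {f : R →+* S}
    (hf : Function.Surjective f) {J : Ideal R} (hJ : IsTwoAbsPrimary J)
    (hker : RingHom.ker f ≤ J) : IsTwoAbsPrimary (J.map f) := by
  have hcomap : (J.map f).comap f = J := by
    rw [Ideal.comap_map_of_surjective' f hf, sup_eq_left.mpr hker]
  have mem_radical {x : R} (hx : x ∈ J.radical) : f x ∈ (J.map f).radical :=
    Ideal.map_radical_le f (Ideal.mem_map_of_mem f hx)
  refine ⟨fun htop => hJ.1 (by rw [← hcomap, htop, Ideal.comap_top]), ?_⟩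
  intro a b c habc
  obtain ⟨a, rfl⟩ := hf a
  obtain ⟨b, rfl⟩ := hf b
  obtain ⟨c, rfl⟩ := hf c
  rw [← map_mul, ← map_mul, ← Ideal.mem_comap, hcomap] at habc
  simp only [← map_mul]
  rcases hJ.2 a b c habc with hab | hac | hbc
  · exact .inl (Ideal.mem_map_of_mem f hab)
  · exact .inr (.inl (mem_radical hac))
  · exact .inr (.inr (mem_radical hbc))

namespace Submodule

variable {R S M : Type*} [CommRing R] [CommRing S] [Algebra R S] [AddCommGroup M] [Module R M]
  [Module S M] [IsScalarTower R S M]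

theorem restrictScalars_colon (N : Submodule S M) (s : Set M) :
    (N.restrictScalars R).colon s = (N.colon s).comap (algebraMap R S) := by
  ext r
  simp [mem_colon, algebraMap_smul]

theorem colon_eq_map_restrictScalars_colon (hS : Function.Surjective (algebraMap R S))
    (N : Submodule S M) (s : Set M) :
    N.colon s = ((N.restrictScalars R).colon s).map (algebraMap R S) := by
  rw [restrictScalars_colon, Ideal.map_comap_of_surjective _ hS]

theorem ker_algebraMap_le_restrictScalars_colon (N : Submodule S M) (s : Set M) :
    RingHom.ker (algebraMap R S) ≤ (N.restrictScalars R).colon s := by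
  rw [restrictScalars_colon, RingHom.ker_eq_comap_bot]
  exact Ideal.comap_mono bot_le

end Submodule

theorem IsPseudoAbsPrimary.of_restrictScalars {R S M : Type*} [CommRing R] [CommRing S]
    [Algebra R S] [AddCommGroup M] [Module R M] [Module S M] [IsScalarTower R S M]
    (hS : Function.Surjective (algebraMap R S)) {N : Submodule S M}
    (hN : IsPseudoAbsPrimary (N.restrictScalars R)) : IsPseudoAbsPrimary N := by
  refine ⟨fun htop => hN.1 (by rw [htop, Submodule.restrictScalars_top]), ?_⟩
  rw [Submodule.colon_eq_map_restrictScalars_colon hS]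
  exact hN.2.map hS (Submodule.ker_algebraMap_le_restrictScalars_colon N _)

/-- If I ⊆ Ann(M) and K is a pseudo-absorbing primary submodule of the R-module M,
then K, viewed as a submodule of M over R/I, is pseudo-absorbing primary, with
(K :_{R/I} M) = (K :_R M)/I; in particular (K :_R M)/I is a 2-absorbing primary
ideal of R/I. -/
theorem stmt_1 {R M : Type*} [CommRing R] [AddCommGroup M] [Module R M]
    (I : Ideal R) (hI : Module.IsTorsionBySet R M I)
    (K : Submodule R M) (hK : IsPseudoAbsPrimary K) :
    letI : Module (R ⧸ I) M := hI.module
    ∃ K' : Submodule (R ⧸ I) M, (K' : Set M) = (K : Set M) ∧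
      Submodule.colon K' ⊤ = (Submodule.colon K ⊤).map (Ideal.Quotient.mk I) ∧
      IsPseudoAbsPrimary K' ∧
      IsTwoAbsPrimary ((Submodule.colon K ⊤).map (Ideal.Quotient.mk I)) := by
  let _ : Module (R ⧸ I) M := hI.module
  have : IsScalarTower R (R ⧸ I) M := hI.isScalarTower
  have hmk : Function.Surjective (algebraMap R (R ⧸ I)) := Ideal.Quotient.mk_surjective
  let K' := (Submodule.orderIsoOfAlgebraMapSurjective hmk).symm K
  have hK' : IsPseudoAbsPrimary K' := .of_restrictScalars (N := K') hmk hK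
  have hcolon : K'.colon ⊤ = (K.colon ⊤).map (Ideal.Quotient.mk I) :=
    Submodule.colon_eq_map_restrictScalars_colon hmk K' ⊤
  exact ⟨K', rfl, hcolon, hK', hcolon ▸ hK'.2⟩
end

section
/- The submodule N = {0, 8} of the Z-module Z/16Z is a 2-absorbing primary submodule but is not a 2-absorbing submodule: 2·2·2 ∈ (N : M) = 8Z but 2·2 ∉ (N : M), while for any a,b ∈ Z and m ∈ Z/16Z with abm ∈ N, one has am ∈ N or bm ∈ N or ab ∈ √(N : M) = 2Z. -/
theorem Ideal.radical_span_singleton_pow_of_prime {R : Type*} [CommRing R] {p : R}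
    (hp : Prime p) {k : ℕ} (hk : k ≠ 0) :
    (Ideal.span {p ^ k}).radical = Ideal.span {p} := by
  rw [← Ideal.span_singleton_pow, Ideal.radical_pow _ hk,
    ((Ideal.span_singleton_prime hp.ne_zero).2 hp).radical]

theorem ZMod.intCast_mem_span_natCast_iff {n d : ℕ} (hd : d ∣ n) (a : ℤ) :
    (a : ZMod n) ∈ Submodule.span ℤ {(d : ZMod n)} ↔ (d : ℤ) ∣ a := by
  rw [Submodule.mem_span_singleton]
  constructor
  · rintro ⟨c, hc⟩
    rw [← Int.cast_natCast, zsmul_eq_mul, ← Int.cast_mul,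
      ZMod.intCast_eq_intCast_iff_dvd_sub] at hc
    exact (dvd_sub_left (dvd_mul_left _ c)).1 ((Int.natCast_dvd_natCast.2 hd).trans hc)
  · rintro ⟨c, rfl⟩
    exact ⟨c, by push_cast; rw [zsmul_eq_mul, mul_comm]⟩

theorem ZMod.colon_span_natCast {n d : ℕ} (hd : d ∣ n) :
    (Submodule.span ℤ {(d : ZMod n)}).colon Set.univ = Ideal.span {(d : ℤ)} := by
  ext a
  rw [Submodule.mem_colon, Ideal.mem_span_singleton, ← ZMod.intCast_mem_span_natCast_iff hd]
  refine ⟨fun h ↦ by simpa using h 1 trivial, fun h m _ ↦ ?_⟩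
  obtain ⟨k, rfl⟩ := ZMod.intCast_surjective m
  rw [← zsmul_one, smul_comm]
  exact Submodule.smul_mem _ k (by simpa using h)

theorem ZMod.mem_of_smul_mem_of_isCoprime {n : ℕ} (N : Submodule ℤ (ZMod n)) {r : ℤ}
    (hr : IsCoprime r n) {m : ZMod n} (hrm : r • m ∈ N) : m ∈ N := by
  obtain ⟨u, v, huv⟩ := hr
  have hm : m = u • r • m := by
    calc m = (u * r + v * n) • m := by rw [huv, one_smul]
      _ = u • r • m := by simp [add_smul, mul_smul]
  rw [hm]
  exact N.smul_mem u hrm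

/-- N = {0,8} ⊆ ℤ/16ℤ is 2-absorbing primary but not 2-absorbing:
(N : M) = 8ℤ, √(N : M) = 2ℤ, 2·2·2 ∈ (N : M) but 2·2 ∉ (N : M), while
abm ∈ N always implies am ∈ N or bm ∈ N or ab ∈ √(N : M). -/
theorem stmt_3 :
    let N : Submodule ℤ (ZMod 16) := Submodule.span ℤ {(8 : ZMod 16)}
    N.colon ⊤ = Ideal.span {(8 : ℤ)} ∧
    (N.colon ⊤).radical = Ideal.span {(2 : ℤ)} ∧
    (2 * 2 * 2 : ℤ) ∈ N.colon ⊤ ∧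
    (2 * 2 : ℤ) ∉ N.colon ⊤ ∧
    (∀ (a b : ℤ) (m : ZMod 16), a • b • m ∈ N →
      a • m ∈ N ∨ b • m ∈ N ∨ a * b ∈ (N.colon ⊤).radical) := by
  intro N
  have hcolon : N.colon ⊤ = Ideal.span {(8 : ℤ)} := ZMod.colon_span_natCast (d := 8) (by norm_num)
  have hradical : (N.colon ⊤).radical = Ideal.span {(2 : ℤ)} := by
    rw [hcolon, show (8 : ℤ) = 2 ^ 3 by norm_num]
    exact Ideal.radical_span_singleton_pow_of_prime Int.prime_two three_ne_zero
  refine ⟨hcolon, hradical, ?_, ?_, fun a b m habm ↦ ?_⟩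
  · rw [hcolon, Ideal.mem_span_singleton]
    decide
  · rw [hcolon, Ideal.mem_span_singleton]
    decide
  by_cases hab : (2 : ℤ) ∣ a * b
  · exact Or.inr (Or.inr (by rwa [hradical, Ideal.mem_span_singleton]))
  -- an odd integer is a unit modulo 16, so it can be cancelled from `a • b • m ∈ N`
  have hcoprime : IsCoprime (a * b) ((16 : ℕ) : ℤ) := by
    rw [show ((16 : ℕ) : ℤ) = 2 ^ 4 by norm_num]
    exact (Int.prime_two.coprime_iff_not_dvd.2 hab).symm.pow_right
  rw [← mul_smul] at habm
  exact Or.inl (N.smul_mem a (ZMod.mem_of_smul_mem_of_isCoprime N hcoprime habm))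
end

section
/- Let R be an integral domain and M a divisible R-module that is a pseudo-absorbing primary multiplication module. Then M is a simple module (every proper submodule of M is zero). -/
/-!
Divisibility forces `(N : M) = 0` for every proper submodule `N`: a nonzero
`r` with `r M ⊆ N` would give `M = r M ⊆ N`. The zero ideal of a domain is prime, hence
2-absorbing primary, so every proper `N` is pseudo-absorbing primary and therefore of the form
`I M`. But `I ⊆ (I M : M) = 0`, so `N = 0`.
-/

theorem Ideal.IsPrime.isTwoAbsPrimary {R : Type*} [CommRing R] {I : Ideal R} (hI : I.IsPrime) :
    IsTwoAbsPrimary I := by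
  refine ⟨hI.ne_top, fun a b c habc => ?_⟩
  rcases hI.mem_or_mem habc with hab | hc
  · exact Or.inl hab
  · exact Or.inr (Or.inl (I.le_radical (I.mul_mem_left a hc)))

namespace Submodule

variable {R M : Type*} [Semiring R] [AddCommMonoid M] [Module R M]

theorem colon_top_eq_bot_of_divisible (hdiv : ∀ r : R, r ≠ 0 → ∀ m : M, ∃ m' : M, r • m' = m)
    {N : Submodule R M} (hN : N ≠ ⊤) : N.colon ⊤ = ⊥ := by
  refine (Submodule.eq_bot_iff _).2 fun r hr => ?_
  by_contra hr0
  refine hN (eq_top_iff.2 fun m _ => ?_)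
  obtain ⟨m', rfl⟩ := hdiv r hr0 m
  exact mem_colon.1 hr m' trivial

theorem le_colon_top_smul_top (I : Ideal R) : I ≤ (I • ⊤ : Submodule R M).colon ⊤ :=
  fun _ hr => mem_colon.2 fun _ _ => smul_mem_smul hr trivial

end Submodule

/-- A divisible pseudo-absorbing primary multiplication module over an integral
domain is simple: every proper submodule is zero. -/
theorem stmt_5 {R M : Type*} [CommRing R] [IsDomain R] [AddCommGroup M] [Module R M]
    (hdiv : ∀ r : R, r ≠ 0 → ∀ m : M, ∃ m' : M, r • m' = m)
    (hM : IsPAPMultiplication R M) :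
    ∀ N : Submodule R M, N ≠ ⊤ → N = ⊥ := by
  intro N hN
  have hcolon : N.colon ⊤ = ⊥ := Submodule.colon_top_eq_bot_of_divisible hdiv hN
  have hpap : IsPseudoAbsPrimary N := ⟨hN, hcolon ▸ Ideal.isPrime_bot.isTwoAbsPrimary⟩
  obtain ⟨I, rfl⟩ := hM N hpap
  have hI : I = ⊥ := le_bot_iff.1 (hcolon ▸ Submodule.le_colon_top_smul_top I)
  rw [hI, Submodule.bot_smul]
end

section
/- Let R be a discrete valuation ring. Then the field of fractions Q(R) of R is not a pseudo-absorbing primary multiplication R-module. -/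
section FieldModule

variable {R K : Type*} [CommRing R] [Field K] [Algebra R K] [FaithfulSMul R K]

theorem Submodule.eq_top_of_smul_mem {N : Submodule R K} {r : R} (hr : r ≠ 0)
    (h : ∀ q : K, r • q ∈ N) : N = ⊤ := by
  have hr' : algebraMap R K r ≠ 0 :=
    (map_ne_zero_iff _ (FaithfulSMul.algebraMap_injective R K)).mpr hr
  refine eq_top_iff.mpr fun q _ => ?_
  simpa [Algebra.smul_def, mul_div_cancel₀ q hr'] using h (q / algebraMap R K r)

theorem Submodule.colon_top_eq_bot_of_ne_top {N : Submodule R K} (hN : N ≠ ⊤) :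
    N.colon ⊤ = ⊥ := by
  refine eq_bot_iff.mpr fun r hr => Ideal.mem_bot.mpr ?_
  by_contra hr0
  exact hN (eq_top_of_smul_mem hr0 fun q => Submodule.mem_colon.mp hr q trivial)

theorem Ideal.smul_top_eq_bot_or_top (I : Ideal R) :
    I • (⊤ : Submodule R K) = ⊥ ∨ I • (⊤ : Submodule R K) = ⊤ := by
  rcases eq_or_ne I ⊥ with rfl | hI
  · exact Or.inl (Submodule.bot_smul _)
  · obtain ⟨r, hrI, hr0⟩ := Submodule.exists_mem_ne_zero_of_ne_bot hI
    exact Or.inr (Submodule.eq_top_of_smul_mem hr0 fun q => Submodule.smul_mem_smul hrI trivial)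

theorem Submodule.isPseudoAbsPrimary_of_ne_top [IsDomain R] {N : Submodule R K} (hN : N ≠ ⊤) :
    IsPseudoAbsPrimary N := by
  refine ⟨hN, ?_⟩
  rw [colon_top_eq_bot_of_ne_top hN]
  exact Ideal.isPrime_bot.isTwoAbsPrimary

end FieldModule

theorem Submodule.one_ne_top_of_not_isField {R K : Type*} [CommRing R] [IsDomain R] [Field K]
    [Algebra R K] [IsFractionRing R K] (hR : ¬IsField R) : (1 : Submodule R K) ≠ ⊤ := by
  intro h
  refine hR ((IsFractionRing.surjective_iff_isField (K := K)).mp fun q => ?_)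
  exact Submodule.mem_one.mp (h ▸ Submodule.mem_top)

/-- For a DVR R, the field of fractions Q(R) is not a pseudo-absorbing primary
multiplication R-module. -/
theorem stmt_7 {R : Type*} [CommRing R] [IsDomain R] [IsDiscreteValuationRing R] :
    ¬ IsPAPMultiplication R (FractionRing R) := by
  intro h
  have hproper : (1 : Submodule R (FractionRing R)) ≠ ⊤ :=
    Submodule.one_ne_top_of_not_isField (IsDiscreteValuationRing.not_isField R)
  obtain ⟨I, hI⟩ := h 1 (Submodule.isPseudoAbsPrimary_of_ne_top hproper)
  rcases I.smul_top_eq_bot_or_top (K := FractionRing R) with hbot | htop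
  · have h1 : (1 : FractionRing R) ∈ (1 : Submodule R (FractionRing R)) := Submodule.one_le.mp le_rfl
    rw [hI, hbot, Submodule.mem_bot] at h1
    exact one_ne_zero h1
  · exact hproper (hI.trans htop)
end

section
/- Let R be a discrete valuation ring with maximal ideal P. For every n ≥ 1, the submodule A_n = (0 :_{E} P^n) of E = E(R/P) is not a 2-absorbing primary submodule of E. -/
/-- A submodule K is 2-absorbing primary if abm ∈ K implies am ∈ K or bm ∈ K
or ab ∈ √(K : M). -/
def Is2AbsPrimarySubmodule {R M : Type*} [CommRing R] [AddCommGroup M] [Module R M]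
    (K : Submodule R M) : Prop :=
  ∀ (a b : R) (m : M), a • b • m ∈ K → a • m ∈ K ∨ b • m ∈ K ∨ a * b ∈ (K.colon ⊤).radical
/-! Let `p` be a uniformizer, so `Aₙ` is the `pⁿ`-torsion of `E`. An injective module over a
domain is divisible, so `ι 1`, which is killed by `p`, equals `pⁿ⁺¹ • m` for some `m`; then
`p • p • m ∈ Aₙ` while `p • m ∉ Aₙ`. Divisibility also makes `E` faithful, so `(Aₙ : E) = 0` and
`p * p` is not in its radical.

Testing injectivity of `E : Type v` against the ideals of `R` needs `R` to be `v`-small. This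
comes from the residue field embedding into `E`: `R` embeds into `∏ R/Pⁿ` by Krull's intersection
theorem, and `R/Pⁿ⁺¹` is an extension of `R/Pⁿ` by a quotient of `R/P`. -/

universe u v w

theorem small_of_ker_subset_range {A B C : Type*} [AddGroup A] [AddGroup B] [Small.{w} B]
    [Small.{w} C] (f : A →+ B) (g : C → A) (hker : ∀ a, f a = 0 → a ∈ Set.range g) :
    Small.{w} A := by
  have hsec : ∀ a, f (a - Function.invFun f (f a)) = 0 := fun a ↦ by
    rw [map_sub, Function.invFun_eq (f := f) ⟨a, rfl⟩, sub_self]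
  choose c hc using fun a ↦ hker _ (hsec a)
  refine small_of_injective (f := fun a ↦ (f a, c a)) fun a a' h ↦ ?_
  simp only [Prod.mk.injEq] at h
  have := hc a
  rw [h.2, hc a', h.1] at this
  exact (sub_left_inj.mp this).symm

section SmallQuotient

variable {R : Type*} [CommRing R]

theorem small_quotient_mul_span_singleton (I : Ideal R) (b : R) [Small.{w} (R ⧸ I)]
    [Small.{w} (R ⧸ Ideal.span {b})] : Small.{w} (R ⧸ I * Ideal.span {b}) := by
  let g : R ⧸ I →ₗ[R] R ⧸ I * Ideal.span {b} :=
    Submodule.mapQ I _ (LinearMap.mulLeft R b) fun x hx ↦ by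
      simpa [mul_comm b] using Ideal.mul_mem_mul hx (Ideal.mem_span_singleton_self b)
  refine small_of_ker_subset_range
    (Ideal.Quotient.factor (Ideal.mul_le_right (I := I))).toAddMonoidHom g ?_
  intro x hx
  obtain ⟨x, rfl⟩ := Ideal.Quotient.mk_surjective x
  rw [RingHom.toAddMonoidHom_eq_coe, AddMonoidHom.coe_coe, Ideal.Quotient.factor_mk,
    Ideal.Quotient.eq_zero_iff_mem] at hx
  obtain ⟨c, rfl⟩ := Ideal.mem_span_singleton'.mp hx
  exact ⟨Ideal.Quotient.mk I c, by rw [mul_comm c]; rfl⟩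

theorem small_quotient_span_singleton_pow (b : R) [Small.{w} (R ⧸ Ideal.span {b})] (n : ℕ) :
    Small.{w} (R ⧸ Ideal.span {b} ^ n) := by
  induction n with
  | zero =>
    have : Subsingleton (R ⧸ Ideal.span {b} ^ 0) := by
      rw [pow_zero, Ideal.one_eq_top]
      infer_instance
    infer_instance
  | succ n ih =>
    rw [pow_succ]
    exact small_quotient_mul_span_singleton _ _

theorem small_of_small_quotient_span_singleton [IsNoetherianRing R] [IsDomain R] {b : R}
    (hb : ¬IsUnit b) [Small.{w} (R ⧸ Ideal.span {b})] : Small.{w} R := by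
  have (n : ℕ) : Small.{w} (R ⧸ Ideal.span {b} ^ n) := small_quotient_span_singleton_pow b n
  refine small_of_injective (f := fun r (n : ℕ) ↦ Ideal.Quotient.mk (Ideal.span {b} ^ n) r)
    fun r r' h ↦ ?_
  have hmem : r - r' ∈ ⨅ n, Ideal.span {b} ^ n :=
    Ideal.mem_iInf.mpr fun n ↦ Ideal.Quotient.eq.mp (congrFun h n)
  rw [Ideal.iInf_pow_eq_bot_of_isDomain _ (by rwa [Ne, Ideal.span_singleton_eq_top])] at hmem
  exact sub_eq_zero.mp hmem

end SmallQuotient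

section InjectiveModule

variable {R : Type u} [CommRing R] [IsDomain R] [Small.{v} R]
  {E : Type v} [AddCommGroup E] [Module R E] [Module.Injective R E]

theorem Module.Injective.exists_smul_eq {r : R} (hr : r ≠ 0) (x : E) : ∃ m : E, r • m = x := by
  obtain ⟨h, hh⟩ := Module.Injective.extension_property R E R R (LinearMap.mulLeft R r)
    (mul_right_injective₀ hr) (LinearMap.toSpanSingleton R E x)
  refine ⟨h 1, ?_⟩
  simpa [← map_smul] using LinearMap.congr_fun hh 1

theorem Submodule.colon_torsionBy_eq_bot [Nontrivial E] {a : R} (ha : a ≠ 0) :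
    (torsionBy R E a).colon ⊤ = ⊥ := by
  refine eq_bot_iff.mpr fun r hr ↦ ?_
  by_contra hr0
  obtain ⟨x, hx⟩ := exists_ne (0 : E)
  obtain ⟨m, rfl⟩ := Module.Injective.exists_smul_eq (mul_ne_zero ha hr0) x
  have := Submodule.mem_colon.mp hr m trivial
  rw [mem_torsionBy_iff, smul_smul] at this
  exact hx this

end InjectiveModule

theorem torsionBySet_maximalIdeal_pow {R M : Type*} [CommRing R] [IsDomain R]
    [IsDiscreteValuationRing R] [AddCommGroup M] [Module R M] {p : R} (hp : Irreducible p)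
    (n : ℕ) :
    Submodule.torsionBySet R M ((IsLocalRing.maximalIdeal R ^ n : Ideal R) : Set R) =
      Submodule.torsionBy R M (p ^ n) := by
  rw [hp.maximalIdeal_eq, Ideal.span_singleton_pow, ← Submodule.torsionBySet_span_singleton_eq]

theorem stmt_8_general {R E : Type*} [CommRing R] [IsDomain R] [IsDiscreteValuationRing R]
    [AddCommGroup E] [Module R E]
    (hinj : Module.Injective R E)
    (ι : (R ⧸ IsLocalRing.maximalIdeal R) →ₗ[R] E) (hι : Function.Injective ι) :
    ∀ n : ℕ, 1 ≤ n →
      ¬ Is2AbsPrimarySubmodule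
        (Submodule.torsionBySet R E ((IsLocalRing.maximalIdeal R ^ n : Ideal R) : Set R)) := by
  intro n _ habs
  obtain ⟨p, hp⟩ := IsDiscreteValuationRing.exists_irreducible R
  have : Small.{_} (R ⧸ Ideal.span {p}) := hp.maximalIdeal_eq ▸ small_of_injective hι
  have : Small.{_} R := small_of_small_quotient_span_singleton hp.not_isUnit
  have hx : ι 1 ≠ 0 := by simpa using hι.ne one_ne_zero
  have hpx : p • ι 1 = 0 := by
    have hp0 : Ideal.Quotient.mk (IsLocalRing.maximalIdeal R) p = 0 :=
      Ideal.Quotient.eq_zero_iff_mem.mpr (hp.maximalIdeal_eq ▸ Ideal.mem_span_singleton_self p)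
    rw [← map_smul, Algebra.smul_def, mul_one, Ideal.Quotient.algebraMap_eq, hp0, map_zero]
  have : Nontrivial E := ⟨⟨_, _, hx⟩⟩
  obtain ⟨m, hm⟩ := hinj.exists_smul_eq (pow_ne_zero (n + 1) hp.ne_zero) (ι 1)
  rw [Is2AbsPrimarySubmodule, torsionBySet_maximalIdeal_pow hp] at habs
  have hmem : p • p • m ∈ Submodule.torsionBy R E (p ^ n) := by
    rw [Submodule.mem_torsionBy_iff, smul_smul, smul_smul, ← pow_succ, mul_comm, mul_smul, hm, hpx]
  have hpm : p • m ∉ Submodule.torsionBy R E (p ^ n) := by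
    rwa [Submodule.mem_torsionBy_iff, smul_smul, ← pow_succ, hm]
  rcases habs p p m hmem with h | h | h
  · exact hpm h
  · exact hpm h
  · rw [Submodule.colon_torsionBy_eq_bot (pow_ne_zero n hp.ne_zero),
      Ideal.radical_bot_of_isReduced, Ideal.mem_bot] at h
    exact mul_self_ne_zero.mpr hp.ne_zero h

/-- For a DVR R with maximal ideal P and E = E(R/P) the injective hull of R/P,
no submodule Aₙ = (0 :_E Pⁿ), n ≥ 1, is 2-absorbing primary in E. -/
theorem stmt_8 {R E : Type*} [CommRing R] [IsDomain R] [IsDiscreteValuationRing R]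
    [AddCommGroup E] [Module R E]
    (hinj : Module.Injective R E)
    (ι : (R ⧸ IsLocalRing.maximalIdeal R) →ₗ[R] E) (hι : Function.Injective ι)
    (hess : ∀ N : Submodule R E, N ≠ ⊥ → N ⊓ LinearMap.range ι ≠ ⊥) :
    ∀ n : ℕ, 1 ≤ n →
      ¬ Is2AbsPrimarySubmodule
        (Submodule.torsionBySet R E ((IsLocalRing.maximalIdeal R ^ n : Ideal R) : Set R)) :=
  stmt_8_general hinj ι hι
end

section
/- Let R = R₁ ×_k R₂ be the pullback of two discrete valuation rings R₁, R₂ (with maximal ideals P₁ = R₁p₁, P₂ = R₂p₂) over their common residue field k. Then the ideals {0}, 0 ⊕ P₂^m, P₁^n ⊕ 0, and P₁^n ⊕ P₂^m of R are 2-absorbing primary ideals for all m, n ≥ 1. -/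
/-- The pullback ring `R = {(r,s) : v₁ r = v₂ s}` of two rings over a common quotient. -/
def pullbackRing {R₁ R₂ k : Type*} [CommRing R₁] [CommRing R₂] [CommRing k]
    (v₁ : R₁ →+* k) (v₂ : R₂ →+* k) : Subring (R₁ × R₂) :=
  RingHom.eqLocus (v₁.comp (RingHom.fst R₁ R₂)) (v₂.comp (RingHom.snd R₁ R₂))

/-- The ideal `I ⊕ J` of the pullback ring, i.e. the trace on the pullback of the
product ideal `I × J` of `R₁ × R₂`. -/
def pbIdeal {R₁ R₂ k : Type*} [CommRing R₁] [CommRing R₂] [CommRing k]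
    (v₁ : R₁ →+* k) (v₂ : R₂ →+* k) (I : Ideal R₁) (J : Ideal R₂) :
    Ideal (pullbackRing v₁ v₂) :=
  Ideal.comap (pullbackRing v₁ v₂).subtype (I.prod J)

/-! The ideals `0 ⊕ P₂ᵐ`, `P₁ⁿ ⊕ 0` and `P₁ⁿ ⊕ P₂ᵐ` have the prime radicals `0 ⊕ P₂`, `P₁ ⊕ 0` and
`P₁ ⊕ P₂`: since `v₁ r = v₂ s` for `(r, s) ∈ R`, the first two are the kernels of the projections
of `R` onto the domains `R₁` and `R₂`, and the last is the preimage of `P₁` under the first one.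
The zero ideal is instead the intersection of the primes `0 ⊕ P₂` and `P₁ ⊕ 0`,
and an intersection of two primes is 2-absorbing. -/

theorem Ideal.radical_prod {R S : Type*} [CommRing R] [CommRing S] (I : Ideal R) (J : Ideal S) :
    (I.prod J).radical = I.radical.prod J.radical := by
  simp only [Ideal.prod, Ideal.radical_inf, Ideal.comap_radical]

theorem isTwoAbsPrimary_of_isPrime_radical {R : Type*} [CommRing R] {I : Ideal R}
    (hI : I.radical.IsPrime) : IsTwoAbsPrimary I := by
  refine ⟨Ideal.radical_eq_top.not.mp hI.ne_top, fun a b c habc => ?_⟩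
  rcases hI.mem_or_mem (Ideal.le_radical habc) with hab | hc
  · rcases hI.mem_or_mem hab with ha | hb
    · exact Or.inr (Or.inl (I.radical.mul_mem_right c ha))
    · exact Or.inr (Or.inr (I.radical.mul_mem_right c hb))
  · exact Or.inr (Or.inl (I.radical.mul_mem_left a hc))

theorem isTwoAbsPrimary_inf_of_isPrime {R : Type*} [CommRing R] {p q : Ideal R}
    (hp : p.IsPrime) (hq : q.IsPrime) : IsTwoAbsPrimary (p ⊓ q) := by
  refine ⟨ne_top_of_le_ne_top hp.ne_top inf_le_left, fun a b c habc => ?_⟩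
  suffices a * b ∈ p ⊓ q ∨ a * c ∈ p ⊓ q ∨ b * c ∈ p ⊓ q by
    rcases this with h | h | h
    exacts [Or.inl h, Or.inr (Or.inl (Ideal.le_radical h)), Or.inr (Or.inr (Ideal.le_radical h))]
  have mem_three : ∀ {P : Ideal R}, P.IsPrime → a * b * c ∈ P → a ∈ P ∨ b ∈ P ∨ c ∈ P :=
    fun hP h => by simpa only [hP.mul_mem_iff_mem_or_mem, or_assoc] using h
  simp only [Ideal.mem_inf] at habc ⊢
  rcases mem_three hp habc.1 with ha | hb | hc <;> rcases mem_three hq habc.2 with ha' | hb' | hc' <;>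
    simp [Ideal.mul_mem_left, Ideal.mul_mem_right, *]

theorem Ideal.IsPrime.radical_pow {R : Type*} [CommSemiring R] {P : Ideal R} (hP : P.IsPrime)
    {n : ℕ} (hn : n ≠ 0) : (P ^ n).radical = P := by
  rw [Ideal.radical_pow P hn, hP.radical]

section Pullback

variable {R₁ R₂ k : Type*} [CommRing R₁] [CommRing R₂] [CommRing k] {v₁ : R₁ →+* k}
  {v₂ : R₂ →+* k}

theorem mem_pbIdeal {I : Ideal R₁} {J : Ideal R₂} {x : pullbackRing v₁ v₂} :
    x ∈ pbIdeal v₁ v₂ I J ↔ (x : R₁ × R₂).1 ∈ I ∧ (x : R₁ × R₂).2 ∈ J :=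
  Iff.rfl

theorem radical_pbIdeal (I : Ideal R₁) (J : Ideal R₂) :
    (pbIdeal v₁ v₂ I J).radical = pbIdeal v₁ v₂ I.radical J.radical := by
  rw [pbIdeal, ← Ideal.comap_radical, Ideal.radical_prod, pbIdeal]

theorem fst_mem_ker_iff_snd_mem_ker (x : pullbackRing v₁ v₂) :
    (x : R₁ × R₂).1 ∈ RingHom.ker v₁ ↔ (x : R₁ × R₂).2 ∈ RingHom.ker v₂ := by
  rw [RingHom.mem_ker, RingHom.mem_ker, show v₁ (x : R₁ × R₂).1 = v₂ (x : R₁ × R₂).2 from x.2]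

theorem pbIdeal_eq_comap_fst {I : Ideal R₁} (hI : I ≤ RingHom.ker v₁) :
    pbIdeal v₁ v₂ I (RingHom.ker v₂) =
      I.comap ((RingHom.fst R₁ R₂).comp (pullbackRing v₁ v₂).subtype) := by
  ext x
  exact ⟨And.left, fun h => ⟨h, (fst_mem_ker_iff_snd_mem_ker x).mp (hI h)⟩⟩

theorem pbIdeal_eq_comap_snd {J : Ideal R₂} (hJ : J ≤ RingHom.ker v₂) :
    pbIdeal v₁ v₂ (RingHom.ker v₁) J =
      J.comap ((RingHom.snd R₁ R₂).comp (pullbackRing v₁ v₂).subtype) := by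
  ext x
  exact ⟨And.right, fun h => ⟨(fst_mem_ker_iff_snd_mem_ker x).mpr (hJ h), h⟩⟩

theorem bot_eq_pbIdeal_inf_pbIdeal :
    (⊥ : Ideal (pullbackRing v₁ v₂)) =
      pbIdeal v₁ v₂ ⊥ (RingHom.ker v₂) ⊓ pbIdeal v₁ v₂ (RingHom.ker v₁) ⊥ := by
  ext x
  simp only [Ideal.mem_inf, mem_pbIdeal, Ideal.mem_bot, Subtype.ext_iff, Prod.ext_iff]
  constructor
  · rintro ⟨h₁, h₂⟩
    simp_all
  · rintro ⟨⟨h₁, -⟩, -, h₂⟩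
    exact ⟨h₁, h₂⟩

end Pullback

theorem stmt_11_general {R₁ R₂ k : Type*} [CommRing R₁] [CommRing R₂] [Field k]
    [IsDomain R₁] [IsDomain R₂] [IsDiscreteValuationRing R₁] [IsDiscreteValuationRing R₂]
    (v₁ : R₁ →+* k) (v₂ : R₂ →+* k)
    (hk₁ : RingHom.ker v₁ = IsLocalRing.maximalIdeal R₁)
    (hk₂ : RingHom.ker v₂ = IsLocalRing.maximalIdeal R₂) :
    IsTwoAbsPrimary (⊥ : Ideal (pullbackRing v₁ v₂)) ∧
    ∀ m n : ℕ, 1 ≤ m → 1 ≤ n →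
      IsTwoAbsPrimary (pbIdeal v₁ v₂ ⊥ (IsLocalRing.maximalIdeal R₂ ^ m)) ∧
      IsTwoAbsPrimary (pbIdeal v₁ v₂ (IsLocalRing.maximalIdeal R₁ ^ n) ⊥) ∧
      IsTwoAbsPrimary (pbIdeal v₁ v₂ (IsLocalRing.maximalIdeal R₁ ^ n)
        (IsLocalRing.maximalIdeal R₂ ^ m)) := by
  rw [← hk₁, ← hk₂]
  have hP₁ := RingHom.ker_isPrime v₁
  have hP₂ := RingHom.ker_isPrime v₂
  refine ⟨?_, fun m n hm hn => ⟨?_, ?_, ?_⟩⟩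
  · rw [bot_eq_pbIdeal_inf_pbIdeal, pbIdeal_eq_comap_fst bot_le, pbIdeal_eq_comap_snd bot_le]
    exact isTwoAbsPrimary_inf_of_isPrime (Ideal.comap_isPrime _ _) (Ideal.comap_isPrime _ _)
  all_goals
    apply isTwoAbsPrimary_of_isPrime_radical
    rw [radical_pbIdeal]
    simp only [hP₁.radical_pow (n := n) (by omega), hP₂.radical_pow (n := m) (by omega),
      Ideal.radical_bot_of_isReduced]
  · rw [pbIdeal_eq_comap_fst bot_le]; exact Ideal.comap_isPrime _ _
  · rw [pbIdeal_eq_comap_snd bot_le]; exact Ideal.comap_isPrime _ _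
  · rw [pbIdeal_eq_comap_fst le_rfl]; exact Ideal.comap_isPrime _ _

/-- In the pullback R = R₁ ×ₖ R₂ of two DVRs over their common residue field k,
the ideals 0, 0 ⊕ P₂ᵐ, P₁ⁿ ⊕ 0 and P₁ⁿ ⊕ P₂ᵐ (m, n ≥ 1) are all 2-absorbing primary. -/
theorem stmt_11 {R₁ R₂ k : Type*} [CommRing R₁] [CommRing R₂] [Field k]
    [IsDomain R₁] [IsDomain R₂] [IsDiscreteValuationRing R₁] [IsDiscreteValuationRing R₂]
    (v₁ : R₁ →+* k) (v₂ : R₂ →+* k)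
    (hv₁ : Function.Surjective v₁) (hv₂ : Function.Surjective v₂)
    (hk₁ : RingHom.ker v₁ = IsLocalRing.maximalIdeal R₁)
    (hk₂ : RingHom.ker v₂ = IsLocalRing.maximalIdeal R₂) :
    IsTwoAbsPrimary (⊥ : Ideal (pullbackRing v₁ v₂)) ∧
    ∀ m n : ℕ, 1 ≤ m → 1 ≤ n →
      IsTwoAbsPrimary (pbIdeal v₁ v₂ ⊥ (IsLocalRing.maximalIdeal R₂ ^ m)) ∧
      IsTwoAbsPrimary (pbIdeal v₁ v₂ (IsLocalRing.maximalIdeal R₁ ^ n) ⊥) ∧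
      IsTwoAbsPrimary (pbIdeal v₁ v₂ (IsLocalRing.maximalIdeal R₁ ^ n)
        (IsLocalRing.maximalIdeal R₂ ^ m)) :=
  stmt_11_general v₁ v₂ hk₁ hk₂
end

section
/- Let I be a proper ideal of a commutative ring R such that √I is a prime ideal. Then I is a 2-absorbing primary ideal of R. -/
theorem Ideal.IsPrime.mul_mem_or_mul_mem_of_mul_mul_mem {R : Type*} [CommSemiring R]
    {P : Ideal R} (hP : P.IsPrime) {a b c : R} (h : a * b * c ∈ P) : a * c ∈ P ∨ b * c ∈ P := by
  rcases hP.mem_or_mem h with hab | hc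
  · rcases hP.mem_or_mem hab with ha | hb
    · exact Or.inl (P.mul_mem_right c ha)
    · exact Or.inr (P.mul_mem_right c hb)
  · exact Or.inl (P.mul_mem_left a hc)

/-- If the radical of a proper ideal I is prime, then I is 2-absorbing primary. -/
theorem stmt_12 {R : Type*} [CommRing R] (I : Ideal R) (hI : I ≠ ⊤)
    (h : I.radical.IsPrime) : IsTwoAbsPrimary I :=
  ⟨hI, fun _ _ _ habc => Or.inr (h.mul_mem_or_mul_mem_of_mul_mul_mem (I.le_radical habc))⟩
end

section
/- Let R be the pullback of two DVRs over their common residue field, and let 0 → K → S → M → 0 be a separated representation of an R-module M. If Ann_R(S) = 0, then Ann_R(M) = 0. -/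
/-- Over the pullback R of two DVRs over their common residue field, if
0 → K → S →^φ M → 0 is a separated representation of M, then Ann_R(S) = 0
implies Ann_R(M) = 0. -/
theorem stmt_15 {R₁ R₂ k : Type*} [CommRing R₁] [CommRing R₂] [Field k]
    [IsDomain R₁] [IsDomain R₂] [IsDiscreteValuationRing R₁] [IsDiscreteValuationRing R₂]
    (v₁ : R₁ →+* k) (v₂ : R₂ →+* k)
    (hv₁ : Function.Surjective v₁) (hv₂ : Function.Surjective v₂)
    (hk₁ : RingHom.ker v₁ = IsLocalRing.maximalIdeal R₁)
    (hk₂ : RingHom.ker v₂ = IsLocalRing.maximalIdeal R₂)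
    {S M : Type*} [AddCommGroup S] [Module (pullbackRing v₁ v₂) S]
    [AddCommGroup M] [Module (pullbackRing v₁ v₂) M]
    (φ : S →ₗ[pullbackRing v₁ v₂] M) (hφ : Function.Surjective φ)
    -- S is separated: P₁S ∩ P₂S = 0
    (hsep : (pbIdeal v₁ v₂ (IsLocalRing.maximalIdeal R₁) ⊥ •
        (⊤ : Submodule (pullbackRing v₁ v₂) S)) ⊓
      (pbIdeal v₁ v₂ ⊥ (IsLocalRing.maximalIdeal R₂) • ⊤) = ⊥)
    -- K ⊆ PS
    (hKP : LinearMap.ker φ ≤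
      pbIdeal v₁ v₂ (IsLocalRing.maximalIdeal R₁) (IsLocalRing.maximalIdeal R₂) •
        (⊤ : Submodule (pullbackRing v₁ v₂) S))
    -- PK = 0
    (hPK : pbIdeal v₁ v₂ (IsLocalRing.maximalIdeal R₁) (IsLocalRing.maximalIdeal R₂) •
        LinearMap.ker φ = ⊥)
    -- PᵢS ∩ K = 0 for i = 1, 2
    (hK1 : (pbIdeal v₁ v₂ (IsLocalRing.maximalIdeal R₁) ⊥ •
        (⊤ : Submodule (pullbackRing v₁ v₂) S)) ⊓ LinearMap.ker φ = ⊥)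
    (hK2 : (pbIdeal v₁ v₂ ⊥ (IsLocalRing.maximalIdeal R₂) •
        (⊤ : Submodule (pullbackRing v₁ v₂) S)) ⊓ LinearMap.ker φ = ⊥) :
    (⊥ : Submodule (pullbackRing v₁ v₂) S).colon ⊤ = ⊥ →
    (⊥ : Submodule (pullbackRing v₁ v₂) M).colon ⊤ = ⊥ := by
  intro hS
  rw [eq_bot_iff]
  intro r hr
  rw [Submodule.mem_colon] at hr
  -- r • s ∈ ker φ for all s
  have hker : ∀ s : S, r • s ∈ LinearMap.ker φ := by
    intro s
    rw [LinearMap.mem_ker, map_smul]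
    exact (Submodule.mem_bot _).mp (hr (φ s) (Submodule.mem_top (R := pullbackRing v₁ v₂)))
  -- for p ∈ P, (p*r) = 0
  have hpr : ∀ p : pullbackRing v₁ v₂, p ∈ pbIdeal v₁ v₂ (IsLocalRing.maximalIdeal R₁)
      (IsLocalRing.maximalIdeal R₂) → p * r = 0 := by
    intro p hp
    have hann : p * r ∈ (⊥ : Submodule (pullbackRing v₁ v₂) S).colon ⊤ := by
      rw [Submodule.mem_colon]
      intro s _
      have : (p * r) • s = p • (r • s) := by rw [mul_smul]
      rw [this]
      have := Submodule.smul_mem_smul hp (hker s)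
      rw [hPK] at this
      exact this
    rw [hS] at hann
    exact (Submodule.mem_bot _).mp hann
  -- pick nonzero elements of maximal ideals
  obtain ⟨π₁, hπ₁m, hπ₁⟩ : ∃ x ∈ IsLocalRing.maximalIdeal R₁, x ≠ 0 := by
    by_contra h
    push_neg at h
    exact IsDiscreteValuationRing.not_a_field R₁ (eq_bot_iff.mpr fun x hx => (Submodule.mem_bot _).mpr (h x hx))
  obtain ⟨π₂, hπ₂m, hπ₂⟩ : ∃ x ∈ IsLocalRing.maximalIdeal R₂, x ≠ 0 := by
    by_contra h
    push_neg at h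
    exact IsDiscreteValuationRing.not_a_field R₂ (eq_bot_iff.mpr fun x hx => (Submodule.mem_bot _).mpr (h x hx))
  have p₁mem : ((π₁, 0) : R₁ × R₂) ∈ pullbackRing v₁ v₂ := by
    show v₁ π₁ = v₂ 0
    rw [map_zero]
    rw [← hk₁] at hπ₁m
    exact hπ₁m
  have p₂mem : ((0, π₂) : R₁ × R₂) ∈ pullbackRing v₁ v₂ := by
    show v₁ 0 = v₂ π₂
    rw [map_zero]
    rw [← hk₂] at hπ₂m
    exact hπ₂m.symm
  have h1 := hpr ⟨(π₁, 0), p₁mem⟩ (by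
    show ((π₁, 0) : R₁ × R₂) ∈ Ideal.prod _ _
    rw [Ideal.mem_prod]
    exact ⟨hπ₁m, Ideal.zero_mem _⟩)
  have h2 := hpr ⟨(0, π₂), p₂mem⟩ (by
    show ((0, π₂) : R₁ × R₂) ∈ Ideal.prod _ _
    rw [Ideal.mem_prod]
    exact ⟨Ideal.zero_mem _, hπ₂m⟩)
  have h1' : π₁ * (r : R₁ × R₂).1 = 0 := congrArg (Prod.fst ∘ Subtype.val) h1
  have h2' : π₂ * (r : R₁ × R₂).2 = 0 := congrArg (Prod.snd ∘ Subtype.val) h2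
  have hr1 : (r : R₁ × R₂).1 = 0 := by
    rcases mul_eq_zero.mp h1' with h | h
    · exact absurd h hπ₁
    · exact h
  have hr2 : (r : R₁ × R₂).2 = 0 := by
    rcases mul_eq_zero.mp h2' with h | h
    · exact absurd h hπ₂
    · exact h
  have : (r : R₁ × R₂) = 0 := Prod.ext hr1 hr2
  exact (Submodule.mem_bot _).mpr (Subtype.ext this)
end

section
/- Let R be a commutative ring, f : R → R' a surjective ring homomorphism, and M' a pseudo-absorbing primary multiplication R'-module. Then M' is a pseudo-absorbing primary multiplication R-module (via restriction of scalars along f). -/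
/-!
Over a surjection `R → R'` the `R`-submodules of `M'` are exactly its `R'`-submodules, the
`R`-colon of a submodule is the preimage of its `R'`-colon, and 2-absorbing primary ideals
descend along surjections. So a pseudo-absorbing primary `R`-submodule `N` is one over `R'`,
hence `N = I' M'`, and then `N = f⁻¹(I') M'` because `f(f⁻¹(I')) = I'`.
-/

theorem IsTwoAbsPrimary.of_comap {R S : Type*} [CommRing R] [CommRing S] {f : R →+* S}
    (hf : Function.Surjective f) {I : Ideal S} (h : IsTwoAbsPrimary (I.comap f)) :
    IsTwoAbsPrimary I := by
  refine ⟨fun hI ↦ h.1 (by rw [hI, Ideal.comap_top]), hf.forall₃.2 fun a b c habc ↦ ?_⟩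
  simpa only [← Ideal.comap_radical, Ideal.mem_comap, map_mul] using
    h.2 a b c (by simpa only [Ideal.mem_comap, map_mul] using habc)

theorem Submodule.restrictScalars_colon_s18 (R : Type*) {S M : Type*} [CommSemiring R] [Semiring S]
    [Algebra R S] [AddCommMonoid M] [Module R M] [Module S M] [IsScalarTower R S M]
    (N : Submodule S M) (s : Set M) :
    (N.restrictScalars R).colon s = (N.colon s).comap (algebraMap R S) := by
  ext r
  simp [mem_colon, algebraMap_smul]

section

variable {R S M : Type*} [CommRing R] [CommRing S] [Algebra R S] [AddCommGroup M]
  [Module R M] [Module S M] [IsScalarTower R S M]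

theorem IsPseudoAbsPrimary.of_restrictScalars_s18 (hRS : Function.Surjective (algebraMap R S))
    {N : Submodule S M} (h : IsPseudoAbsPrimary (N.restrictScalars R)) :
    IsPseudoAbsPrimary N :=
  ⟨fun hN ↦ h.1 (by rw [hN, Submodule.restrictScalars_top]),
    .of_comap hRS (N.restrictScalars_colon_s18 R ⊤ ▸ h.2)⟩

theorem IsPAPMultiplication.of_surjective_algebraMap
    (hRS : Function.Surjective (algebraMap R S)) (h : IsPAPMultiplication S M) :
    IsPAPMultiplication R M := by
  intro N hN
  set N' := (Submodule.orderIsoOfAlgebraMapSurjective hRS).symm N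
  have hN' : N'.restrictScalars R = N := rfl
  obtain ⟨I, hI⟩ := h N' (.of_restrictScalars hRS (hN' ▸ hN))
  refine ⟨I.comap (algebraMap R S), ?_⟩
  rw [← hN', hI, ← Submodule.restrictScalars_top R S M, ← Ideal.smul_restrictScalars,
    Ideal.map_comap_of_surjective _ hRS]

end

/-- If f : R → R' is a surjective ring homomorphism and M' is a pseudo-absorbing
primary multiplication R'-module, then M' is a pseudo-absorbing primary
multiplication R-module via restriction of scalars along f. -/
theorem stmt_18 {R R' M' : Type*} [CommRing R] [CommRing R']
    [AddCommGroup M'] [Module R' M'] (f : R →+* R') (hf : Function.Surjective f)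
    (hM : IsPAPMultiplication R' M') :
    letI : Module R M' := Module.compHom M' f
    IsPAPMultiplication R M' := by
  let : Module R M' := Module.compHom M' f
  let : Algebra R R' := f.toAlgebra
  have : IsScalarTower R R' M' := IsScalarTower.of_compHom R R' M'
  exact hM.of_surjective_algebraMap hf
end
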